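/- arXiv:1809.09660 — 2 statements merged into one kernel-verified Lean document; each statement's English description precedes it below -/
import Mathlib

section
/- Let (X,μ) be a standard Borel probability space, R a standard Borel equivalence relation on X, and A ⊂ X a measurable subset with μ(A) > 0. Then cost_{μ|_A}(R|_A) ≤ cost_μ(R). -/
open MeasureTheory ENNReal

namespace Paper

/-- A partial measurable isomorphism whose graph is contained in the relation `r`
(an element of the pseudo-full group `⟦r⟧`). -/
structure PartialIso (X : Type*) [MeasurableSpace X] (r : X → X → Prop) where
  dom : Set X
  toFun : X → X
  dom_meas : MeasurableSet dom
  meas : Measurable toFun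
  injOn : Set.InjOn toFun dom
  image_meas : MeasurableSet (toFun '' dom)
  mem_rel : ∀ x ∈ dom, r x (toFun x)

/-- A (countable) family of partial isomorphisms is a graphing of `r` if the equivalence
relation it generates is exactly `r`. -/
def IsGraphing {X : Type*} [MeasurableSpace X] {r : X → X → Prop}
    (Φ : ℕ → PartialIso X r) : Prop :=
  ∀ x y, r x y ↔
    Relation.EqvGen (fun a b => ∃ i, a ∈ (Φ i).dom ∧ b = (Φ i).toFun a) x y

/-- The cost of a relation `r` on a measure space: the infimum over graphings of the
sum of the measures of the domains. -/
noncomputable def cost {X : Type*} [MeasurableSpace X] (μ : Measure X)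
    (r : X → X → Prop) : ℝ≥0∞ :=
  ⨅ Φ : {Φ : ℕ → PartialIso X r // IsGraphing Φ}, ∑' i, μ ((Φ.1 i).dom)

/-- A standard equivalence relation: measurable, countable classes, and all measurable
automorphisms preserving the classes preserve the measure. -/
structure IsStdEqRel {X : Type*} [MeasurableSpace X] (μ : Measure X)
    (r : X → X → Prop) : Prop where
  equivalence : Equivalence r
  measurableSet_rel : MeasurableSet {p : X × X | r p.1 p.2}
  countable_classes : ∀ x, {y | r x y}.Countable
  fullGroup_measurePreserving :
    ∀ f : X ≃ᵐ X, (∀ x y, r x y → r (f x) (f y)) → MeasurePreserving f μ μ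

/-- A set is invariant under a relation. -/
def IsInvariant {X : Type*} (r : X → X → Prop) (A : Set X) : Prop :=
  ∀ x ∈ A, ∀ y, r x y → y ∈ A

/-- A complete section: every orbit meets the set. -/
def IsCompleteSection {X : Type*} (r : X → X → Prop) (A : Set X) : Prop :=
  ∀ x : X, ∃ y ∈ A, r x y

/-- A relation is aperiodic if almost every orbit is infinite. -/
def IsAperiodic {X : Type*} [MeasurableSpace X] (μ : Measure X)
    (r : X → X → Prop) : Prop :=
  ∀ᵐ x ∂μ, {y | r x y}.Infinite

/-- A relation is ergodic if every invariant measurable set is null or conull. -/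
def IsErgodicRel {X : Type*} [MeasurableSpace X] (μ : Measure X)
    (r : X → X → Prop) : Prop :=
  ∀ A : Set X, MeasurableSet A → IsInvariant r A → μ A = 0 ∨ μ Aᶜ = 0

/-- `R ⊂ S` is a translation finite extension: finitely many full-group elements of `S`
suffice to cover almost every `S`-orbit by translates of `R`-orbits. -/
def IsTransFinExt {X : Type*} [MeasurableSpace X] (μ : Measure X)
    (r s : X → X → Prop) : Prop :=
  (∀ x y, r x y → s x y) ∧
  ∃ F : Finset (X ≃ᵐ X), (∀ f ∈ F, ∀ x, s x (f x)) ∧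
    ∀ᵐ x ∂μ, ∀ y, s x y ↔ ∃ f ∈ F, ∃ g ∈ F, ∃ z, r (g.symm x) z ∧ y = f z


open MeasureTheory

/-!
Fix a graphing `Φ` of `R`. Every point of the saturation of `A` is moved into `A` by some word in
the generators and their inverses; taking for each point the first such word in a fixed
enumeration cuts the saturation into measurable cells and defines a retraction `π` onto `A`
that is the identity on `A`. Each `Φ i`, split according to the cells containing the source and
the target point, induces partial isomorphisms `π x ↦ π (Φ i x)` of `A`; these generate `R|_A`,
because chains of `Φ`-edges starting in `A` stay in the saturation and project to chains of
induced edges. Elements of the pseudo full group preserve `μ` (on a set disjoint from its image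
such an element extends to an involution of the full group, and a countable separating family
cuts every domain into such sets and a fixed part), so the induced domains coming from `Φ i` have
total measure at most `μ (dom (Φ i))`. Taking the infimum over `Φ` gives the bound.
-/

open Set Function

section PseudoFullGroup

variable {X : Type*} [MeasurableSpace X] {r : X → X → Prop}

structure MemPseudoFullGroup (r : X → X → Prop) (e : PartialEquiv X X) : Prop where
  measurableSet_source : MeasurableSet e.source
  measurableSet_target : MeasurableSet e.target
  measurable : Measurable e
  measurable_symm : Measurable e.symm
  rel : ∀ x ∈ e.source, r x (e x)

namespace MemPseudoFullGroup

variable {e e' : PartialEquiv X X}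

theorem refl (hr : Equivalence r) : MemPseudoFullGroup r (PartialEquiv.refl X) :=
  ⟨.univ, .univ, measurable_id, measurable_id, fun x _ => hr.refl x⟩

theorem symm (hr : Equivalence r) (he : MemPseudoFullGroup r e) :
    MemPseudoFullGroup r e.symm where
  measurableSet_source := he.measurableSet_target
  measurableSet_target := he.measurableSet_source
  measurable := he.measurable_symm
  measurable_symm := he.measurable
  rel y hy := by
    simpa only [e.right_inv hy] using hr.symm (he.rel _ (e.map_target hy))

theorem trans (hr : Equivalence r) (he : MemPseudoFullGroup r e)
    (he' : MemPseudoFullGroup r e') : MemPseudoFullGroup r (e.trans e') where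
  measurableSet_source := he.measurableSet_source.inter (he.measurable he'.measurableSet_source)
  measurableSet_target :=
    he'.measurableSet_target.inter (he'.measurable_symm he.measurableSet_target)
  measurable := he'.measurable.comp he.measurable
  measurable_symm := he.measurable_symm.comp he'.measurable_symm
  rel x hx := hr.trans (he.rel x hx.1) (he'.rel _ hx.2)

theorem measurableSet_image (he : MemPseudoFullGroup r e) {s : Set X} (hs : MeasurableSet s)
    (hse : s ⊆ e.source) : MeasurableSet (e '' s) := by
  rw [e.image_eq_target_inter_inv_preimage hse]
  exact he.measurableSet_target.inter (he.measurable_symm hs)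

theorem restr (he : MemPseudoFullGroup r e) {s : Set X} (hs : MeasurableSet s) :
    MemPseudoFullGroup r (e.restr s) where
  measurableSet_source := he.measurableSet_source.inter hs
  measurableSet_target := he.measurableSet_target.inter (he.measurable_symm hs)
  measurable := he.measurable
  measurable_symm := he.measurable_symm
  rel x hx := he.rel x hx.1

end MemPseudoFullGroup

theorem PartialIso.extend_toFun (θ : PartialIso X r) {x : X} (hx : x ∈ θ.dom) :
    extend (θ.dom.domRestrict θ.toFun) Subtype.val id (θ.toFun x) = x :=
  θ.injOn.injective.extend_apply Subtype.val id ⟨x, hx⟩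

noncomputable def PartialIso.toPartialEquiv (θ : PartialIso X r) : PartialEquiv X X where
  toFun := θ.toFun
  invFun := extend (θ.dom.domRestrict θ.toFun) Subtype.val id
  source := θ.dom
  target := θ.toFun '' θ.dom
  map_source' _ hx := mem_image_of_mem _ hx
  map_target' := by
    rintro _ ⟨x, hx, rfl⟩
    rwa [θ.extend_toFun hx]
  left_inv' _ hx := θ.extend_toFun hx
  right_inv' := by
    rintro _ ⟨x, hx, rfl⟩
    rw [θ.extend_toFun hx]

@[simp]
theorem PartialIso.toPartialEquiv_source (θ : PartialIso X r) :
    θ.toPartialEquiv.source = θ.dom := rfl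

@[simp]
theorem PartialIso.coe_toPartialEquiv (θ : PartialIso X r) : ⇑θ.toPartialEquiv = θ.toFun := rfl

theorem PartialIso.memPseudoFullGroup [StandardBorelSpace X] (θ : PartialIso X r) :
    MemPseudoFullGroup r θ.toPartialEquiv := by
  have := θ.dom_meas.standardBorel
  have hemb : MeasurableEmbedding (θ.dom.domRestrict θ.toFun) :=
    (θ.meas.comp measurable_subtype_coe).measurableEmbedding θ.injOn.injective
  exact ⟨θ.dom_meas, θ.image_meas, θ.meas,
    hemb.measurable_extend measurable_subtype_coe measurable_id, θ.mem_rel⟩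

end PseudoFullGroup

section MeasurePreserving

variable {X : Type*} [MeasurableSpace X] {μ : Measure X} {r : X → X → Prop}

theorem IsStdEqRel.measurePreserving_of_involutive (hr : IsStdEqRel μ r) {T : X → X}
    (hT : Measurable T) (hinv : Involutive T) (hTr : ∀ x, r x (T x)) :
    MeasurePreserving T μ μ :=
  hr.fullGroup_measurePreserving ⟨hinv.toPerm T, hT, hT⟩ fun x y hxy =>
    hr.equivalence.trans (hr.equivalence.symm (hTr x)) (hr.equivalence.trans hxy (hTr y))

theorem _root_.PartialEquiv.measure_image_eq_of_cover {ι : Type*} [Countable ι]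
    {e : PartialEquiv X X} (hsymm : Measurable e.symm)
    {Q : ι → Set X} (hQ : ∀ i, MeasurableSet (Q i)) (hQe : ∀ i, Q i ⊆ e.source)
    (h : ∀ i, ∀ F ⊆ Q i, MeasurableSet F → μ (e '' F) = μ F)
    {E : Set X} (hE : MeasurableSet E) (hEQ : E ⊆ ⋃ i, Q i) : μ (e '' E) = μ E := by
  set ν := (μ.restrict e.target).map e.symm
  have hν : ∀ F ⊆ e.source, MeasurableSet F → ν F = μ (e '' F) := by
    intro F hF hFm
    rw [Measure.map_apply hsymm hFm, Measure.restrict_apply (hsymm hFm),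
      e.image_eq_target_inter_inv_preimage hF, inter_comm]
  have hrestr : ν.restrict (⋃ i, Q i) = μ.restrict (⋃ i, Q i) := by
    refine Measure.restrict_iUnion_congr.2 fun i => Measure.ext fun F hF => ?_
    have hFQ := hF.inter (hQ i)
    rw [Measure.restrict_apply hF, Measure.restrict_apply hF,
      hν _ (inter_subset_right.trans (hQe i)) hFQ, h i _ inter_subset_right hFQ]
  rw [← hν E (hEQ.trans (iUnion_subset hQe)) hE, ← Measure.restrict_eq_self ν hEQ, hrestr,
    Measure.restrict_eq_self μ hEQ]

namespace MemPseudoFullGroup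

variable {e : PartialEquiv X X}

theorem measure_image_of_disjoint (hr : IsStdEqRel μ r) (he : MemPseudoFullGroup r e)
    {P : Set X} (hP : MeasurableSet P) (hPe : P ⊆ e.source) (hdisj : Disjoint P (e '' P)) :
    μ (e '' P) = μ P := by
  classical
  set Q := e '' P
  have hQe : Q ⊆ e.target := e.image_source_eq_target ▸ image_mono hPe
  let T : X → X := P.piecewise e (Q.piecewise e.symm id)
  have hTP : EqOn T e P := P.piecewise_eqOn _ _
  have hTQ : EqOn T e.symm Q := fun x hx => by
    simp [T, piecewise_eq_of_notMem _ _ _ (hdisj.notMem_of_mem_right hx), hx]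
  have hTo : ∀ x, x ∉ P → x ∉ Q → T x = x := fun x hP hQ => by
    simp [T, piecewise_eq_of_notMem _ _ _ hP, piecewise_eq_of_notMem _ _ _ hQ]
  have hinv : Involutive T := by
    intro x
    by_cases hxP : x ∈ P
    · rw [hTP hxP, hTQ (mem_image_of_mem e hxP), e.left_inv (hPe hxP)]
    by_cases hxQ : x ∈ Q
    · obtain ⟨y, hy, rfl⟩ := hxQ
      rw [hTQ (mem_image_of_mem e hy), e.left_inv (hPe hy), hTP hy]
    · rw [hTo x hxP hxQ, hTo x hxP hxQ]
  have hTr : ∀ x, r x (T x) := by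
    intro x
    by_cases hxP : x ∈ P
    · rw [hTP hxP]; exact he.rel x (hPe hxP)
    by_cases hxQ : x ∈ Q
    · rw [hTQ hxQ]; exact (he.symm hr.equivalence).rel x (hQe hxQ)
    · rw [hTo x hxP hxQ]; exact hr.equivalence.refl x
  have hmp := hr.measurePreserving_of_involutive
    (Measurable.piecewise hP he.measurable
      (Measurable.piecewise (he.measurableSet_image hP hPe) he.measurable_symm measurable_id))
    hinv hTr
  have hpre : T ⁻¹' P = Q := by
    rw [← congrFun hinv.image_eq_preimage_symm P, hTP.image_eq]
  rw [← hpre, hmp.measure_preimage hP.nullMeasurableSet]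

theorem measure_image [StandardBorelSpace X] (hr : IsStdEqRel μ r)
    (he : MemPseudoFullGroup r e) {E : Set X} (hE : MeasurableSet E) (hEe : E ⊆ e.source) :
    μ (e '' E) = μ E := by
  obtain ⟨f, hfm, hfi⟩ := MeasurableSpace.measurable_injection_nat_bool_of_countablySeparated X
  -- On `piece (n, b)` the `n`-th coordinate of `f` changes from `b`, so it misses its image.
  let piece : ℕ × Bool → Set X := fun p =>
    e.source ∩ {x | f x p.1 = p.2} ∩ {x | f (e x) p.1 ≠ p.2}
  let Q : Option (ℕ × Bool) → Set X := fun o => o.elim (e.source \ ⋃ p, piece p) piece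
  have hpiece : ∀ p, MeasurableSet (piece p) := fun p =>
    (he.measurableSet_source.inter
      (((measurable_pi_apply p.1).comp hfm) (measurableSet_singleton p.2))).inter
      (((measurable_pi_apply p.1).comp (hfm.comp he.measurable))
        (measurableSet_singleton p.2)).compl
  have hQ : ∀ o, MeasurableSet (Q o) := by
    rintro (_ | p)
    exacts [he.measurableSet_source.diff (.iUnion hpiece), hpiece p]
  have hQe : ∀ o, Q o ⊆ e.source := by
    rintro (_ | p)
    exacts [sdiff_subset, fun x hx => hx.1.1]
  have hcover : e.source ⊆ ⋃ o, Q o := fun x hx => by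
    by_cases hx' : x ∈ ⋃ p, piece p
    · obtain ⟨p, hp⟩ := mem_iUnion.1 hx'
      exact mem_iUnion.2 ⟨some p, hp⟩
    · exact mem_iUnion.2 ⟨none, hx, hx'⟩
  refine PartialEquiv.measure_image_eq_of_cover he.measurable_symm
    hQ hQe ?_ hE (hEe.trans hcover)
  rintro (_ | p) F hF hFm
  · refine congrArg μ (EqOn.image_eq_self fun x hx => ?_)
    by_contra hne
    obtain ⟨n, hn⟩ := not_forall.1 fun h => hne (hfi (funext h))
    exact (hF hx).2 (mem_iUnion.2 ⟨(n, f x n), ⟨(hF hx).1, rfl⟩, hn⟩)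
  · refine measure_image_of_disjoint hr he hFm (hF.trans (hQe _)) ?_
    rw [disjoint_left]
    rintro _ hx ⟨y, hy, rfl⟩
    exact (hF hy).2 (hF hx).1.2

end MemPseudoFullGroup

end MeasurePreserving

theorem _root_.Relation.EqvGen.mem_iff_mem {α : Type*} {E : α → α → Prop} {S : Set α}
    (hS : ∀ x y, E x y → (x ∈ S ↔ y ∈ S)) {x y : α} (h : Relation.EqvGen E x y) :
    x ∈ S ↔ y ∈ S := by
  induction h with
  | rel x y hxy => exact hS x y hxy
  | refl x => rfl
  | symm x y _ ih => exact ih.symm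
  | trans x y z _ _ ih₁ ih₂ => exact ih₁.trans ih₂

theorem _root_.Relation.EqvGen.map_of_invariant {α β : Type*} {E : α → α → Prop}
    {F : β → β → Prop} {S : Set α} (hS : ∀ x y, E x y → (x ∈ S ↔ y ∈ S)) (p : S → β)
    (hp : ∀ x y : S, E x y → F (p x) (p y)) {x y : α} (h : Relation.EqvGen E x y)
    (hx : x ∈ S) (hy : y ∈ S) : Relation.EqvGen F (p ⟨x, hx⟩) (p ⟨y, hy⟩) := by
  induction h with
  | rel x y hxy => exact .rel _ _ (hp _ _ hxy)
  | refl x => exact .refl _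
  | symm x y _ ih => exact .symm _ _ (ih hy hx)
  | trans x y z hxy _ ih₁ ih₂ =>
    have hy' := (hxy.mem_iff_mem hS).1 hx
    exact .trans _ _ _ (ih₁ hx hy') (ih₂ hy' hy)

def edgeRel {Y : Type*} [MeasurableSpace Y] {s : Y → Y → Prop} {ι : Type*}
    (Ψ : ι → PartialIso Y s) (a b : Y) : Prop :=
  ∃ i, a ∈ (Ψ i).dom ∧ b = (Ψ i).toFun a

theorem cost_le_tsum {Y : Type*} [MeasurableSpace Y] (ν : Measure Y) {s : Y → Y → Prop}
    {ι : Type*} [Denumerable ι] (Ψ : ι → PartialIso Y s)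
    (hΨ : ∀ x y, Relation.EqvGen (edgeRel Ψ) x y ↔ s x y) :
    cost ν s ≤ ∑' i, ν (Ψ i).dom := by
  have hedge : edgeRel (Ψ ∘ Denumerable.ofNat ι) = edgeRel Ψ := by
    ext a b
    exact ⟨fun ⟨n, h⟩ => ⟨_, h⟩, fun ⟨i, h⟩ => ⟨Encodable.encode i, by simpa using h⟩⟩
  have hgraph : IsGraphing (Ψ ∘ Denumerable.ofNat ι) := fun x y => by
    rw [← hΨ, ← hedge]
    rfl
  calc cost ν s ≤ ∑' n, ν (Ψ (Denumerable.ofNat ι n)).dom :=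
        iInf_le (fun Φ : {Φ // IsGraphing Φ} => ∑' n, ν (Φ.1 n).dom) ⟨_, hgraph⟩
    _ = ∑' i, ν (Ψ i).dom := (Denumerable.eqv ι).symm.tsum_eq fun i => ν (Ψ i).dom

section Subtype

variable {X : Type*} {A : Set X} {e : PartialEquiv X X}

open Classical in
noncomputable def _root_.PartialEquiv.restrictSubtype (e : PartialEquiv X X)
    (ht : e.target ⊆ A) : A → A :=
  fun a => ⟨e.source.piecewise e id a, by
    by_cases ha : (a : X) ∈ e.source
    · simpa [ha] using ht (e.map_source ha)
    · simp [ha]⟩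

theorem _root_.PartialEquiv.coe_restrictSubtype_apply (ht : e.target ⊆ A) {a : A}
    (ha : (a : X) ∈ e.source) : (e.restrictSubtype ht a : X) = e a := by
  classical
  exact piecewise_eq_of_mem _ _ _ ha

variable [MeasurableSpace X] {r : X → X → Prop}

noncomputable def MemPseudoFullGroup.toPartialIso (he : MemPseudoFullGroup r e)
    (hs : e.source ⊆ A) (ht : e.target ⊆ A) : PartialIso A (fun a b : A => r a b) where
  dom := Subtype.val ⁻¹' e.source
  toFun := e.restrictSubtype ht
  dom_meas := measurable_subtype_coe he.measurableSet_source
  meas := by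
    classical
    exact ((Measurable.piecewise he.measurableSet_source he.measurable measurable_id).comp
      measurable_subtype_coe).subtype_mk
  injOn a ha b hb hab := Subtype.ext <| e.injOn ha hb <| by
    rw [← e.coe_restrictSubtype_apply ht ha, ← e.coe_restrictSubtype_apply ht hb, hab]
  image_meas := by
    have himage :
        e.restrictSubtype ht '' (Subtype.val ⁻¹' e.source) = Subtype.val ⁻¹' e.target := by
      ext b
      constructor
      · rintro ⟨a, ha, rfl⟩
        simpa [e.coe_restrictSubtype_apply ht ha] using e.map_source ha
      · intro hb
        refine ⟨⟨e.symm b, hs (e.map_target hb)⟩, e.map_target hb, Subtype.ext ?_⟩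
        rw [e.coe_restrictSubtype_apply ht (e.map_target hb)]
        exact e.right_inv hb
    rw [himage]
    exact measurable_subtype_coe he.measurableSet_target
  mem_rel a ha := by simpa [e.coe_restrictSubtype_apply ht ha] using he.rel a ha

theorem MemPseudoFullGroup.toPartialIso_dom (he : MemPseudoFullGroup r e) (hs : e.source ⊆ A)
    (ht : e.target ⊆ A) : (he.toPartialIso hs ht).dom = Subtype.val ⁻¹' e.source := rfl

theorem MemPseudoFullGroup.toPartialIso_toFun (he : MemPseudoFullGroup r e) (hs : e.source ⊆ A)
    (ht : e.target ⊆ A) : (he.toPartialIso hs ht).toFun = e.restrictSubtype ht := rfl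

theorem MemPseudoFullGroup.measure_toPartialIso_dom (he : MemPseudoFullGroup r e)
    (hs : e.source ⊆ A) (ht : e.target ⊆ A) (hA : MeasurableSet A) (μ : Measure X) :
    μ.comap Subtype.val (he.toPartialIso hs ht).dom = μ e.source := by
  rw [he.toPartialIso_dom, comap_subtype_coe_apply hA, Subtype.image_preimage_coe,
    inter_eq_right.2 hs]

end Subtype

section Saturation

variable {X : Type*} [MeasurableSpace X] {r : X → X → Prop} (Φ : ℕ → PartialIso X r)
  (A : Set X)

noncomputable def letter : ℕ × Bool → PartialEquiv X X
  | (i, true) => (Φ i).toPartialEquiv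
  | (i, false) => (Φ i).toPartialEquiv.symm

noncomputable def word : List (ℕ × Bool) → PartialEquiv X X
  | [] => PartialEquiv.refl X
  | c :: w => (letter Φ c).trans (word w)

theorem memPseudoFullGroup_word [StandardBorelSpace X] (hr : Equivalence r) :
    ∀ w, MemPseudoFullGroup r (word Φ w)
  | [] => .refl hr
  | (i, true) :: w => ((Φ i).memPseudoFullGroup).trans hr (memPseudoFullGroup_word hr w)
  | (i, false) :: w =>
    (((Φ i).memPseudoFullGroup).symm hr).trans hr (memPseudoFullGroup_word hr w)

def wordPreimage (w : List (ℕ × Bool)) : Set X := (word Φ w).source ∩ word Φ w ⁻¹' A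

@[simp]
theorem wordPreimage_nil : wordPreimage Φ A [] = A := by
  simp [wordPreimage, word]

theorem mem_wordPreimage_cons {c : ℕ × Bool} {w : List (ℕ × Bool)} {x : X} :
    x ∈ wordPreimage Φ A (c :: w) ↔
      x ∈ (letter Φ c).source ∧ letter Φ c x ∈ wordPreimage Φ A w := by
  simp [wordPreimage, word, and_assoc]

theorem measurableSet_wordPreimage [StandardBorelSpace X] (hr : Equivalence r)
    (hA : MeasurableSet A) (w : List (ℕ × Bool)) : MeasurableSet (wordPreimage Φ A w) :=
  (memPseudoFullGroup_word Φ hr w).measurableSet_source.inter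
    ((memPseudoFullGroup_word Φ hr w).measurable hA)

def saturation : Set X := ⋃ w, wordPreimage Φ A w

theorem subset_saturation : A ⊆ saturation Φ A := fun x hx =>
  mem_iUnion.2 ⟨[], by simpa using hx⟩

theorem mem_saturation_iff_of_mem_dom {i : ℕ} {x : X} (hx : x ∈ (Φ i).dom) :
    x ∈ saturation Φ A ↔ (Φ i).toFun x ∈ saturation Φ A := by
  have hy : (Φ i).toFun x ∈ (letter Φ (i, false)).source := mem_image_of_mem _ hx
  have hxy : letter Φ (i, false) ((Φ i).toFun x) = x := (Φ i).extend_toFun hx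
  simp only [saturation, mem_iUnion]
  constructor
  · rintro ⟨w, hw⟩
    exact ⟨(i, false) :: w, (mem_wordPreimage_cons Φ A).2 ⟨hy, by rwa [hxy]⟩⟩
  · rintro ⟨w, hw⟩
    exact ⟨(i, true) :: w, (mem_wordPreimage_cons Φ A).2 ⟨hx, hw⟩⟩

-- `wordAt` is surjective and `wordAt 0 = []`, which makes `cell 0 = A`.
def wordAt (n : ℕ) : List (ℕ × Bool) := (Encodable.decode n).getD []

def cell : ℕ → Set X := disjointed fun n => wordPreimage Φ A (wordAt n)

theorem cell_zero : cell Φ A 0 = A := by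
  simp [cell, disjointed_zero, wordAt]

theorem cell_subset (n : ℕ) : cell Φ A n ⊆ wordPreimage Φ A (wordAt n) :=
  disjointed_subset _ n

theorem measurableSet_cell [StandardBorelSpace X] (hr : Equivalence r) (hA : MeasurableSet A)
    (n : ℕ) : MeasurableSet (cell Φ A n) :=
  MeasurableSet.disjointed (fun _ => measurableSet_wordPreimage Φ A hr hA _) n

theorem eq_of_mem_cell {m n : ℕ} {x : X} (hm : x ∈ cell Φ A m) (hn : x ∈ cell Φ A n) :
    m = n :=
  (disjoint_disjointed _).eq (not_disjoint_iff.2 ⟨x, hm, hn⟩)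

theorem exists_mem_cell {x : X} (hx : x ∈ saturation Φ A) : ∃ n, x ∈ cell Φ A n := by
  have hsurj : Surjective wordAt := fun w => ⟨Encodable.encode w, by simp [wordAt]⟩
  rwa [saturation, ← hsurj.iUnion_comp, ← iUnion_disjointed, mem_iUnion] at hx

noncomputable def cellIndex (x : saturation Φ A) : ℕ := (exists_mem_cell Φ A x.2).choose

theorem mem_cell_cellIndex (x : saturation Φ A) : (x : X) ∈ cell Φ A (cellIndex Φ A x) :=
  (exists_mem_cell Φ A x.2).choose_spec

noncomputable def retraction (x : saturation Φ A) : A :=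
  ⟨word Φ (wordAt (cellIndex Φ A x)) x, (cell_subset Φ A _ (mem_cell_cellIndex Φ A x)).2⟩

theorem retraction_of_mem {a : X} (ha : a ∈ A) :
    retraction Φ A ⟨a, subset_saturation Φ A ha⟩ = ⟨a, ha⟩ := by
  have h0 : cellIndex Φ A ⟨a, subset_saturation Φ A ha⟩ = 0 :=
    eq_of_mem_cell Φ A (mem_cell_cellIndex Φ A _) ((cell_zero Φ A).symm ▸ ha)
  simp [retraction, h0, wordAt, word]

end Saturation

section Induced

variable {X : Type*} [MeasurableSpace X] {r : X → X → Prop} (Φ : ℕ → PartialIso X r)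
  (A : Set X)

def edgePiece (i m n : ℕ) : Set X := cell Φ A m ∩ (Φ i).dom ∩ (Φ i).toFun ⁻¹' cell Φ A n

noncomputable def inducedEquiv (i m n : ℕ) : PartialEquiv X X :=
  ((word Φ (wordAt m)).symm.trans ((Φ i).toPartialEquiv.trans (word Φ (wordAt n)))).restr
    (word Φ (wordAt m) '' edgePiece Φ A i m n)

variable {Φ A}

theorem edgePiece_subset_source {i m n : ℕ} :
    edgePiece Φ A i m n ⊆ (word Φ (wordAt m)).source :=
  fun _ hx => (cell_subset Φ A m hx.1.1).1

theorem inducedEquiv_source (i m n : ℕ) :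
    (inducedEquiv Φ A i m n).source = word Φ (wordAt m) '' edgePiece Φ A i m n := by
  rw [inducedEquiv, PartialEquiv.restr_source, inter_eq_right]
  rintro _ ⟨x, hx, rfl⟩
  simp [(word Φ _).map_source (edgePiece_subset_source hx),
    (word Φ _).left_inv (edgePiece_subset_source hx), hx.1.2, (cell_subset Φ A n hx.2).1]

theorem inducedEquiv_apply {i m n : ℕ} {x : X} (hx : x ∈ edgePiece Φ A i m n) :
    inducedEquiv Φ A i m n (word Φ (wordAt m) x) = word Φ (wordAt n) ((Φ i).toFun x) := by
  simp [inducedEquiv, (word Φ _).left_inv (edgePiece_subset_source hx)]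

theorem inducedEquiv_source_subset (i m n : ℕ) : (inducedEquiv Φ A i m n).source ⊆ A := by
  rw [inducedEquiv_source]
  rintro _ ⟨x, hx, rfl⟩
  exact (cell_subset Φ A m hx.1.1).2

theorem inducedEquiv_target_subset (i m n : ℕ) : (inducedEquiv Φ A i m n).target ⊆ A := by
  rw [← PartialEquiv.image_source_eq_target, inducedEquiv_source]
  rintro _ ⟨_, ⟨x, hx, rfl⟩, rfl⟩
  rw [inducedEquiv_apply hx]
  exact (cell_subset Φ A n hx.2).2

variable [StandardBorelSpace X]

theorem measurableSet_edgePiece (hr : Equivalence r) (hA : MeasurableSet A) (i m n : ℕ) :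
    MeasurableSet (edgePiece Φ A i m n) :=
  ((measurableSet_cell Φ A hr hA m).inter (Φ i).dom_meas).inter
    ((Φ i).meas (measurableSet_cell Φ A hr hA n))

theorem memPseudoFullGroup_inducedEquiv (hr : Equivalence r) (hA : MeasurableSet A)
    (i m n : ℕ) :
    MemPseudoFullGroup r (inducedEquiv Φ A i m n) :=
  ((((memPseudoFullGroup_word Φ hr _).symm hr).trans hr
    ((Φ i).memPseudoFullGroup.trans hr (memPseudoFullGroup_word Φ hr _))).restr
    ((memPseudoFullGroup_word Φ hr _).measurableSet_image (measurableSet_edgePiece hr hA i m n)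
      edgePiece_subset_source))

variable (Φ A)

noncomputable def inducedIso (hr : Equivalence r) (hA : MeasurableSet A) (t : ℕ × ℕ × ℕ) :
    PartialIso A (fun a b : A => r a b) :=
  (memPseudoFullGroup_inducedEquiv (Φ := Φ) hr hA t.1 t.2.1 t.2.2).toPartialIso
    (inducedEquiv_source_subset t.1 t.2.1 t.2.2) (inducedEquiv_target_subset t.1 t.2.1 t.2.2)

end Induced

section Main

variable {X : Type*} [MeasurableSpace X] [StandardBorelSpace X] {r : X → X → Prop}
  (Φ : ℕ → PartialIso X r) (A : Set X)

theorem edgeRel_inducedIso_retraction (hr : Equivalence r) (hA : MeasurableSet A)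
    {x y : saturation Φ A} (hxy : edgeRel Φ x y) :
    edgeRel (inducedIso Φ A hr hA) (retraction Φ A x) (retraction Φ A y) := by
  obtain ⟨i, hx, hy⟩ := hxy
  have hxE : (x : X) ∈ edgePiece Φ A i (cellIndex Φ A x) (cellIndex Φ A y) :=
    ⟨⟨mem_cell_cellIndex Φ A x, hx⟩, by
      rw [mem_preimage, ← hy]
      exact mem_cell_cellIndex Φ A y⟩
  have hsource : (retraction Φ A x : X) ∈
      (inducedEquiv Φ A i (cellIndex Φ A x) (cellIndex Φ A y)).source := by
    rw [inducedEquiv_source]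
    exact mem_image_of_mem _ hxE
  refine ⟨(i, cellIndex Φ A x, cellIndex Φ A y), hsource, Subtype.ext ?_⟩
  rw [inducedIso, MemPseudoFullGroup.toPartialIso_toFun,
    PartialEquiv.coe_restrictSubtype_apply _ hsource]
  exact (inducedEquiv_apply hxE).symm ▸ congrArg _ hy

theorem eqvGen_edgeRel_inducedIso_iff (hr : Equivalence r) (hA : MeasurableSet A)
    (hΦ : IsGraphing Φ) (a b : A) :
    Relation.EqvGen (edgeRel (inducedIso Φ A hr hA)) a b ↔ r a b := by
  constructor
  · intro h
    refine (hr.comap Subtype.val).eqvGen_iff.1 (Relation.EqvGen.mono ?_ _ _ h)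
    rintro a _ ⟨t, ht, rfl⟩
    exact (inducedIso Φ A hr hA t).mem_rel a ht
  · intro hab
    have h := ((hΦ a b).1 hab).map_of_invariant
      (fun x y ⟨i, hx, hy⟩ => hy ▸ mem_saturation_iff_of_mem_dom Φ A hx) (retraction Φ A)
      (fun _ _ => edgeRel_inducedIso_retraction Φ A hr hA) (subset_saturation Φ A a.2)
      (subset_saturation Φ A b.2)
    rwa [retraction_of_mem, retraction_of_mem] at h

theorem tsum_measure_edgePiece_le (hr : Equivalence r) (hA : MeasurableSet A) (μ : Measure X)
    (i : ℕ) :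
    ∑' mn : ℕ × ℕ, μ (edgePiece Φ A i mn.1 mn.2) ≤ μ (Φ i).dom := by
  have hdisj : Pairwise (Disjoint on fun mn : ℕ × ℕ => edgePiece Φ A i mn.1 mn.2) := by
    rintro ⟨m, n⟩ ⟨m', n'⟩ hne
    refine disjoint_left.2 fun x hx hx' => hne ?_
    exact Prod.ext (eq_of_mem_cell Φ A hx.1.1 hx'.1.1) (eq_of_mem_cell Φ A hx.2 hx'.2)
  calc ∑' mn : ℕ × ℕ, μ (edgePiece Φ A i mn.1 mn.2)
      ≤ μ (⋃ mn : ℕ × ℕ, edgePiece Φ A i mn.1 mn.2) :=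
        tsum_meas_le_meas_iUnion_of_disjoint μ
          (fun mn => measurableSet_edgePiece hr hA i mn.1 mn.2) hdisj
    _ ≤ μ (Φ i).dom := measure_mono (iUnion_subset fun _ _ hx => hx.1.2)

theorem cost_restrict_le_tsum {μ : Measure X} (hr : IsStdEqRel μ r) (hA : MeasurableSet A)
    (hΦ : IsGraphing Φ) :
    cost (μ.comap (Subtype.val : A → X)) (fun a b : A => r a b) ≤ ∑' i, μ (Φ i).dom :=
  calc cost (μ.comap (Subtype.val : A → X)) (fun a b : A => r a b)
      ≤ ∑' t, μ.comap Subtype.val (inducedIso Φ A hr.equivalence hA t).dom :=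
        cost_le_tsum (μ.comap Subtype.val) (inducedIso Φ A hr.equivalence hA)
          (eqvGen_edgeRel_inducedIso_iff Φ A hr.equivalence hA hΦ)
    _ = ∑' t : ℕ × ℕ × ℕ, μ (edgePiece Φ A t.1 t.2.1 t.2.2) := tsum_congr fun t => by
        rw [inducedIso, MemPseudoFullGroup.measure_toPartialIso_dom _ _ _ hA,
          inducedEquiv_source, (memPseudoFullGroup_word Φ hr.equivalence _).measure_image hr
            (measurableSet_edgePiece hr.equivalence hA _ _ _) edgePiece_subset_source]
    _ = ∑' i, ∑' mn : ℕ × ℕ, μ (edgePiece Φ A i mn.1 mn.2) := ENNReal.tsum_prod'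
    _ ≤ ∑' i, μ (Φ i).dom :=
        ENNReal.tsum_le_tsum (tsum_measure_edgePiece_le Φ A hr.equivalence hA μ)

end Main

theorem cost_restrict_le_general {X : Type*} [MeasurableSpace X] [StandardBorelSpace X]
    (μ : Measure X) (r : X → X → Prop)
    (hr : IsStdEqRel μ r) (A : Set X) (hmeasA : MeasurableSet A) :
    cost (μ.comap (Subtype.val : A → X)) (fun a b : A => r ↑a ↑b) ≤ cost μ r :=
  le_iInf fun Φ => cost_restrict_le_tsum Φ.1 A hr hmeasA Φ.2

/-- The cost of the restriction of a standard equivalence relation to a positive measure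
subset is at most the cost of the relation. -/
theorem cost_restrict_le {X : Type*} [MeasurableSpace X] [StandardBorelSpace X]
    (μ : Measure X) [IsProbabilityMeasure μ] (r : X → X → Prop)
    (hr : IsStdEqRel μ r) (A : Set X) (hmeasA : MeasurableSet A) (hA : 0 < μ A) :
    cost (μ.comap (Subtype.val : A → X)) (fun a b : A => r ↑a ↑b) ≤ cost μ r :=
  cost_restrict_le_general μ r hr A hmeasA

end Paper
end

section
/- In the setup of the main theorem (M an oriented closed connected n-manifold with infinite fundamental group Γ, α = Γ ↷ (X,μ) an essentially free ergodic standard Γ-space with orbit relation S, and c = Σ_{j=1}^m f_j ⊗ σ_j an α-parametrised fundamental cycle in reduced form with lifts satisfying σ_j(v₀) ∈ D for a relatively compact fundamental domain D), define γ_j ∈ Γ by σ_j(v₁) ∈ γ_j·D and partial automorphisms φ_j : supp f_j → γ_j⁻¹·(supp f_j), x ↦ γ_j⁻¹·x. Then the equivalence relation R generated by φ₁,…,φ_m is a subrelation of S and cost_μ(R) ≤ Σ_{j=1}^m μ(supp f_j) ≤ |c|₁. -/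
open MeasureTheory ENNReal

namespace Paper

open MeasureTheory ENNReal
open scoped Classical

/-- The topological standard simplex associated with `x : SimplexCategory`
(the older Mathlib definition `SimplexCategory.toTopObj`). -/
def SimplexCategory.toTopObj (x : SimplexCategory) : Set (Fin (x.len + 1) → NNReal) :=
  {f | ∑ i, f i = 1}

/-- The map between topological standard simplices induced by a morphism
(the older Mathlib definition `SimplexCategory.toTopMap`). -/
def SimplexCategory.toTopMap {x y : SimplexCategory} (f : x ⟶ y)
    (g : SimplexCategory.toTopObj x) : SimplexCategory.toTopObj y :=
  ⟨fun i => ∑ j ∈ Finset.univ.filter (fun j => f.toOrderHom j = i), g.1 j, by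
    simp only [SimplexCategory.toTopObj, Set.mem_ofPred_eq]
    rw [← Finset.sum_biUnion]
    · have hg := g.2
      simp only [SimplexCategory.toTopObj, Set.mem_ofPred_eq] at hg
      convert hg
      ext j
      simp
    · intro i _ k _ hik
      rw [Function.onFun, Finset.disjoint_iff_ne]
      intro a ha b hb hab
      simp only [Finset.mem_filter] at ha hb
      exact hik (ha.2.symm.trans (hab ▸ hb.2))⟩

theorem SimplexCategory.continuous_toTopMap {x y : SimplexCategory} (f : x ⟶ y) :
    Continuous (SimplexCategory.toTopMap f) := by
  refine Continuous.subtype_mk (continuous_pi fun i => ?_) _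
  exact continuous_finsetSum _ fun j _ =>
    (continuous_apply j).comp continuous_subtype_val

/-- Singular `n`-simplices in a space `N`. -/
abbrev SSimplex (n : ℕ) (N : Type*) [TopologicalSpace N] : Type _ :=
  C(SimplexCategory.toTopObj (SimplexCategory.mk n), N)

/-- The `k`-th face of a singular `(n+1)`-simplex. -/
noncomputable def faceMap {N : Type*} [TopologicalSpace N] {n : ℕ} (k : Fin (n + 2))
    (σ : SSimplex (n + 1) N) : SSimplex n N :=
  σ.comp ⟨SimplexCategory.toTopMap (SimplexCategory.δ k),
    SimplexCategory.continuous_toTopMap _⟩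

/-- The `i`-th vertex of the topological standard simplex. -/
noncomputable def vertex {n : ℕ} (i : Fin (n + 1)) :
    SimplexCategory.toTopObj (SimplexCategory.mk n) :=
  ⟨fun j => if j = i then 1 else 0, by
    simp only [SimplexCategory.toTopObj, Set.mem_setOf_eq]
    exact (Finset.sum_eq_single_of_mem i (Finset.mem_univ i) fun b _ hb => if_neg hb).trans (if_pos rfl)⟩

/-- The coefficient of `τ` in the boundary of the chain with coefficients `c`. -/
noncomputable def bdryCoeff {N : Type*} [TopologicalSpace N] {Z : Type*} [CommRing Z]
    {n : ℕ} (c : SSimplex (n + 1) N → Z) (τ : SSimplex n N) : Z :=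
  ∑ᶠ σ : SSimplex (n + 1) N,
    ∑ k : Fin (n + 2), if faceMap k σ = τ then ((-1 : ℤ) ^ (k : ℕ)) • c σ else 0

/-- Locally finite singular chains with coefficients in `Z`. -/
structure LFChain (n : ℕ) (N : Type*) [TopologicalSpace N] (Z : Type*) [CommRing Z] where
  coeff : SSimplex n N → Z
  locFin : ∀ K : Set N, IsCompact K →
    {σ : SSimplex n N | coeff σ ≠ 0 ∧ (Set.range σ ∩ K).Nonempty}.Finite

/-- A locally finite chain is a cycle if its boundary vanishes (in degree 0 there is
no condition). -/
def IsLFCycle {N : Type*} [TopologicalSpace N] {Z : Type*} [CommRing Z] :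
    ∀ {n : ℕ}, LFChain n N Z → Prop
  | 0, _ => True
  | _ + 1, c => ∀ τ, bdryCoeff c.coeff τ = 0

/-- A coefficient function is a locally finite boundary. -/
def IsLFBoundary {N : Type*} [TopologicalSpace N] {Z : Type*} [CommRing Z] {n : ℕ}
    (f : SSimplex n N → Z) : Prop :=
  ∃ b : LFChain (n + 1) N Z, ∀ τ, f τ = bdryCoeff b.coeff τ

/-- Restriction of a locally finite chain at a point `x`: keep only the simplices whose
image contains `x`; this is a finite chain. -/
noncomputable def restr {N : Type*} [TopologicalSpace N] {Z : Type*} [CommRing Z]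
    {n : ℕ} (x : N) (c : LFChain n N Z) : SSimplex n N →₀ Z :=
  Finsupp.onFinset (c.locFin {x} isCompact_singleton).toFinset
    (fun σ => if x ∈ Set.range σ then c.coeff σ else 0)
    (by
      intro σ h
      rw [Set.Finite.mem_toFinset]
      by_cases hx : x ∈ Set.range σ
      · simp only [if_pos hx] at h
        exact ⟨h, ⟨x, hx, rfl⟩⟩
      · simp only [if_neg hx, ne_eq, not_true_eq_false] at h)

/-- Restriction of a finite chain at a point `x`. -/
noncomputable def finRestr {N : Type*} [TopologicalSpace N] {Z : Type*} [CommRing Z]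
    {n : ℕ} (x : N) (w : SSimplex n N →₀ Z) : SSimplex n N →₀ Z :=
  Finsupp.onFinset w.support
    (fun σ => if x ∈ Set.range σ then w σ else 0)
    (by
      intro σ h
      by_cases hx : x ∈ Set.range σ
      · simp only [if_pos hx] at h
        exact Finsupp.mem_support_iff.mpr h
      · simp only [if_neg hx, ne_eq, not_true_eq_false] at h)

/-- A finite chain is a relative cycle relative to `N \ {x}`: its boundary is supported
on simplices avoiding `x`. -/
def IsRelCycle {N : Type*} [TopologicalSpace N] {Z : Type*} [CommRing Z] :
    ∀ {n : ℕ}, N → (SSimplex n N →₀ Z) → Prop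
  | 0, _, _ => True
  | m + 1, x, c => ∀ τ : SSimplex m N, x ∈ Set.range (⇑τ) → bdryCoeff (⇑c) τ = 0

/-- Two finite chains are homologous relative to `N \ {x}`. -/
def RelHomologous {N : Type*} [TopologicalSpace N] {Z : Type*} [CommRing Z] {n : ℕ}
    (x : N) (c c' : SSimplex n N →₀ Z) : Prop :=
  ∃ b : SSimplex (n + 1) N →₀ Z, ∀ τ : SSimplex n N, x ∈ Set.range (⇑τ) → c τ - c' τ = bdryCoeff (⇑b) τ

/-- A relative cycle `c` generates the local homology `H_n(N, N \ {x}; Z) ≅ Z`. -/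
def IsLocalGenerator {N : Type*} [TopologicalSpace N] {Z : Type*} [CommRing Z] {n : ℕ}
    (x : N) (c : SSimplex n N →₀ Z) : Prop :=
  IsRelCycle x c ∧
    ∀ d : SSimplex n N →₀ Z, IsRelCycle x d → ∃! a : Z, RelHomologous x d (a • c)

/-- A locally finite fundamental cycle: a locally finite cycle whose restriction at every
point generates the local homology. This encodes (a representative of) the locally finite
fundamental class of an oriented manifold. -/
def IsLFFundamentalClass {N : Type*} [TopologicalSpace N] {Z : Type*} [CommRing Z]
    {n : ℕ} (c : LFChain n N Z) : Prop :=
  IsLFCycle c ∧ ∀ x : N, IsLocalGenerator x (restr x c)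

/-- A finite chain is a cycle. -/
def IsFinCycle {N : Type*} [TopologicalSpace N] {Z : Type*} [CommRing Z] :
    ∀ {n : ℕ}, (SSimplex n N →₀ Z) → Prop
  | 0, _ => True
  | _ + 1, w => ∀ τ, bdryCoeff (⇑w) τ = 0

/-- A fundamental cycle of a closed manifold: a finite cycle whose restriction at every
point generates the local homology. -/
def IsFinFundCycle {N : Type*} [TopologicalSpace N] {Z : Type*} [CommRing Z] {n : ℕ}
    (w : SSimplex n N →₀ Z) : Prop :=
  IsFinCycle w ∧ ∀ x : N, IsLocalGenerator x (finRestr x w)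


open MeasureTheory ENNReal
open scoped Classical

/-- A parametrised chain: an element of `L^∞(X, Z) ⊗_{ZΓ} C_n(M̃; Z)`, encoded as a
`Γ`-equivariant family of bounded measurable `Z`-valued coefficient functions indexed by
the singular simplices of the universal cover, supported on finitely many `Γ`-orbits. -/
structure ParamChain (n : ℕ) (Γ : Type*) [Group Γ] (Mt : Type*) [TopologicalSpace Mt]
    [MulAction Γ Mt] [ContinuousConstSMul Γ Mt]
    (X : Type*) [MeasurableSpace X] [MulAction Γ X] (Z : Type*) [CommRing Z] where
  coeff : SSimplex n Mt → X → Z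
  measurable_level : ∀ σ z, MeasurableSet {x | coeff σ x = z}
  finiteRange : ∀ σ, (Set.range (coeff σ)).Finite
  equivariant : ∀ (γ : Γ) σ x, coeff (γ • σ) x = coeff σ (γ⁻¹ • x)
  orbitFinite : ∃ s : Finset (SSimplex n Mt),
    ∀ σ, coeff σ ≠ 0 → ∃ τ ∈ s, ∃ γ : Γ, σ = γ • τ

variable {n : ℕ} {Γ : Type*} [Group Γ] {Mt : Type*} [TopologicalSpace Mt]
  [MulAction Γ Mt] [ContinuousConstSMul Γ Mt]
  {X : Type*} [MeasurableSpace X] [MulAction Γ X] {Z : Type*} [CommRing Z]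

/-- The coefficient of the boundary of a parametrised chain. -/
noncomputable def pbdryCoeff (b : ParamChain (n + 1) Γ Mt X Z)
    (σ : SSimplex n Mt) (x : X) : Z :=
  ∑ᶠ τ : SSimplex (n + 1) Mt,
    ∑ k : Fin (n + 2), if faceMap k τ = σ then ((-1 : ℤ) ^ (k : ℕ)) • b.coeff τ x else 0

/-- A parametrised chain is a cycle. -/
def IsParamCycle : ∀ {n : ℕ}, ParamChain n Γ Mt X Z → Prop
  | 0, _ => True
  | _ + 1, c => ∀ σ x, pbdryCoeff c σ x = 0

/-- Two parametrised chains are homologous. -/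
def ParamHomologous (c c' : ParamChain n Γ Mt X Z) : Prop :=
  ∃ b : ParamChain (n + 1) Γ Mt X Z, ∀ σ x, c.coeff σ x - c'.coeff σ x = pbdryCoeff b σ x

/-- A parametrised fundamental cycle: a parametrised cycle homologous to the image of a
`Z`-fundamental cycle of `M` under the canonical inclusion. -/
def IsParamFundCycle {M : Type*} [TopologicalSpace M] (p : C(Mt, M))
    (c : ParamChain n Γ Mt X Z) : Prop :=
  IsParamCycle c ∧
    ∃ w : SSimplex n M →₀ Z, IsFinFundCycle w ∧
      ∃ c₀ : ParamChain n Γ Mt X Z,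
        (∀ σ x, c₀.coeff σ x = w (p.comp σ)) ∧ ParamHomologous c c₀

/-- The `ℓ¹`-norm (in reduced form) of a parametrised integral chain: the sum over the
`Γ`-orbits of simplices of the integral of the absolute value of the coefficient function. -/
noncomputable def paramNorm (μ : Measure X) (c : ParamChain n Γ Mt X ℤ) : ℝ≥0∞ :=
  ∑' o : Quotient (MulAction.orbitRel Γ (SSimplex n Mt)),
    sSup {r : ℝ≥0∞ | ∃ σ : SSimplex n Mt,
      Quotient.mk (MulAction.orbitRel Γ (SSimplex n Mt)) σ = o ∧
      r = ∫⁻ x, ((c.coeff σ x).natAbs : ℝ≥0∞) ∂μ}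

/-- The weightless norm of a parametrised chain: the sum over the `Γ`-orbits of simplices
of the measure of the support of the coefficient function. -/
noncomputable def weightlessNorm (μ : Measure X) (c : ParamChain n Γ Mt X Z) : ℝ≥0∞ :=
  ∑' o : Quotient (MulAction.orbitRel Γ (SSimplex n Mt)),
    sSup {r : ℝ≥0∞ | ∃ σ : SSimplex n Mt,
      Quotient.mk (MulAction.orbitRel Γ (SSimplex n Mt)) σ = o ∧
      r = μ {x | c.coeff σ x ≠ 0}}

/-- The `α`-parametrised simplicial volume: the infimal `ℓ¹`-norm of parametrised
fundamental cycles. -/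
noncomputable def paramSV (n : ℕ) (Γ : Type*) [Group Γ] (Mt : Type*) [TopologicalSpace Mt]
    [MulAction Γ Mt] [ContinuousConstSMul Γ Mt] (M : Type*) [TopologicalSpace M]
    (p : C(Mt, M)) (X : Type*) [MeasurableSpace X] [MulAction Γ X]
    (μ : Measure X) : ℝ≥0∞ :=
  ⨅ c : {c : ParamChain n Γ Mt X ℤ // IsParamFundCycle p c}, paramNorm μ c.1

/-- The weightless `(α; Z)`-parametrised simplicial volume. -/
noncomputable def weightlessSV (n : ℕ) (Γ : Type*) [Group Γ] (Mt : Type*)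
    [TopologicalSpace Mt] [MulAction Γ Mt] [ContinuousConstSMul Γ Mt] (M : Type*)
    [TopologicalSpace M] (p : C(Mt, M)) (X : Type*) [MeasurableSpace X] [MulAction Γ X]
    (μ : Measure X) (Z : Type*) [CommRing Z] : ℝ≥0∞ :=
  ⨅ c : {c : ParamChain n Γ Mt X Z // IsParamFundCycle p c}, weightlessNorm μ c.1

/-- A standard `Γ`-space: a standard Borel probability space with a measurable
measure-preserving `Γ`-action. -/
structure StdGammaSpace (Γ : Type*) [Group Γ] where
  carrier : Type
  mX : MeasurableSpace carrier
  std : @StandardBorelSpace carrier mX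
  act : MulAction Γ carrier
  μ : @Measure carrier mX
  prob : @IsProbabilityMeasure carrier mX μ
  pres : ∀ γ : Γ, @MeasurePreserving carrier carrier mX mX
    (fun x => @SMul.smul Γ carrier act.toSMul γ x) μ μ

/-- The orbit relation of a standard `Γ`-space. -/
def StdGammaSpace.orbitRel {Γ : Type*} [Group Γ] (α : StdGammaSpace Γ) :
    α.carrier → α.carrier → Prop :=
  fun x y => ∃ γ : Γ, y = @SMul.smul Γ α.carrier α.act.toSMul γ x

/-- The cost of a standard `Γ`-space. -/
noncomputable def StdGammaSpace.cost {Γ : Type*} [Group Γ] (α : StdGammaSpace Γ) :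
    ℝ≥0∞ := by
  letI := α.mX
  exact Paper.cost α.μ α.orbitRel

/-- The cost of a group: the infimum of the costs of its standard `Γ`-spaces. -/
noncomputable def groupCost (Γ : Type*) [Group Γ] : ℝ≥0∞ :=
  ⨅ α : StdGammaSpace Γ, α.cost

/-- The parametrised simplicial volume of a standard `Γ`-space. -/
noncomputable def StdGammaSpace.paramSV {Γ : Type*} [Group Γ] (α : StdGammaSpace Γ)
    (n : ℕ) (Mt : Type*) [TopologicalSpace Mt] [MulAction Γ Mt]
    [ContinuousConstSMul Γ Mt] (M : Type*) [TopologicalSpace M] (p : C(Mt, M)) :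
    ℝ≥0∞ := by
  letI := α.mX
  letI := α.act
  exact Paper.paramSV n Γ Mt M p α.carrier α.μ

/-- The integral foliated simplicial volume: the infimum of the parametrised simplicial
volumes over all standard `Γ`-spaces. -/
noncomputable def ifsv (n : ℕ) (Γ : Type*) [Group Γ] (Mt : Type*) [TopologicalSpace Mt]
    [MulAction Γ Mt] [ContinuousConstSMul Γ Mt] (M : Type*) [TopologicalSpace M]
    (p : C(Mt, M)) : ℝ≥0∞ :=
  ⨅ α : StdGammaSpace Γ, α.paramSV n Mt M p


open MeasureTheory ENNReal
open scoped Pointwise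

/-! Each `φ_j` is the restriction of a translation `x ↦ γ_j⁻¹ • x` to a measurable set, so the
relation it generates sits inside the orbit relation, and padding `φ_1, …, φ_m` with empty partial
isomorphisms gives a graphing of `R` of cost `Σ_j μ(supp f_j)`. The last inequality holds because
a nonzero integer has absolute value at least `1`. -/

theorem exists_smul_eq_of_eqvGen {G α : Type*} [Group G] [MulAction G α] {r : α → α → Prop}
    (hr : ∀ x y, r x y → ∃ g : G, y = g • x)
    {x y : α} (h : Relation.EqvGen r x y) : ∃ g : G, y = g • x := by
  induction h with
  | rel a b hab => exact hr a b hab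
  | refl a => exact ⟨1, (one_smul G a).symm⟩
  | symm a b _ ih =>
    obtain ⟨g, rfl⟩ := ih
    exact ⟨g⁻¹, (inv_smul_smul g a).symm⟩
  | trans a b c _ _ ihab ihbc =>
    obtain ⟨g, rfl⟩ := ihab
    obtain ⟨h, rfl⟩ := ihbc
    exact ⟨h * g, (mul_smul h g a).symm⟩

namespace PartialIso

variable {α : Type*} [MeasurableSpace α] {r : α → α → Prop}

def empty : PartialIso α r where
  dom := ∅
  toFun := id
  dom_meas := .empty
  meas := measurable_id
  injOn := Set.injOn_empty _
  image_meas := by simpa only [Set.image_empty] using MeasurableSet.empty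
  mem_rel _ hx := absurd hx (Set.notMem_empty _)

def smul {G : Type*} [Group G] [MulAction G α] [MeasurableConstSMul G α] (g : G) (A : Set α)
    (hA : MeasurableSet A) (hr : ∀ x ∈ A, r x (g • x)) : PartialIso α r where
  dom := A
  toFun := (g • ·)
  dom_meas := hA
  meas := measurable_const_smul g
  injOn := (MulAction.injective g).injOn
  image_meas := by simpa only [Set.image_smul] using hA.const_smul g
  mem_rel := hr

def padFin {m : ℕ} (Φ : Fin m → PartialIso α r) (k : ℕ) : PartialIso α r :=
  if h : k < m then Φ ⟨k, h⟩ else empty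

theorem exists_padFin_step_iff {m : ℕ} (Φ : Fin m → PartialIso α r) (a b : α) :
    (∃ k, a ∈ (padFin Φ k).dom ∧ b = (padFin Φ k).toFun a) ↔
      ∃ i, a ∈ (Φ i).dom ∧ b = (Φ i).toFun a := by
  constructor
  · rintro ⟨k, hk⟩
    by_cases h : k < m
    · exact ⟨⟨k, h⟩, by simpa only [padFin, dif_pos h] using hk⟩
    · simp only [padFin, dif_neg h, empty, Set.mem_empty_iff_false, false_and] at hk
  · rintro ⟨i, hi⟩
    exact ⟨i, by simpa only [padFin, dif_pos i.isLt] using hi⟩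

theorem tsum_measure_padFin_dom (μ : Measure α) {m : ℕ} (Φ : Fin m → PartialIso α r) :
    ∑' k, μ (padFin Φ k).dom = ∑ i, μ (Φ i).dom := by
  rw [tsum_eq_sum (s := Finset.range m), Finset.sum_range]
  · exact Finset.sum_congr rfl fun i _ => by simp only [padFin, dif_pos i.isLt]
  · intro k hk
    simp only [padFin, dif_neg (show ¬k < m by simpa using hk), empty, measure_empty]

end PartialIso

theorem cost_le_sum_measure_dom {α : Type*} [MeasurableSpace α] (μ : Measure α)
    {r : α → α → Prop} {m : ℕ} (Φ : Fin m → PartialIso α r)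
    (hΦ : ∀ x y, r x y ↔
      Relation.EqvGen (fun a b => ∃ i, a ∈ (Φ i).dom ∧ b = (Φ i).toFun a) x y) :
    cost μ r ≤ ∑ i, μ (Φ i).dom := by
  have hgraph : IsGraphing (PartialIso.padFin Φ) := by
    intro x y
    simpa only [PartialIso.exists_padFin_step_iff] using hΦ x y
  rw [← PartialIso.tsum_measure_padFin_dom μ Φ]
  exact iInf_le (fun Ψ : {Ψ : ℕ → PartialIso α r // IsGraphing Ψ} => ∑' k, μ (Ψ.1 k).dom)
    ⟨_, hgraph⟩

theorem measure_ne_zero_le_lintegral_natAbs {α : Type*} [MeasurableSpace α] (μ : Measure α)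
    {f : α → ℤ} (hf : MeasurableSet {x | f x ≠ 0}) :
    μ {x | f x ≠ 0} ≤ ∫⁻ x, ((f x).natAbs : ℝ≥0∞) ∂μ := by
  rw [← lintegral_indicator_one hf]
  refine lintegral_mono fun x => ?_
  by_cases hx : f x = 0
  · simp [hx]
  · rw [Set.indicator_of_mem (show x ∈ {x | f x ≠ 0} from hx)]
    exact Nat.one_le_cast.2 (Int.natAbs_pos.2 hx)

theorem cost_genRel_le_norm_general
    (n : ℕ)
    (Γ : Type) [Group Γ]
    (Mt : Type) [TopologicalSpace Mt]
    [MulAction Γ Mt] [ContinuousConstSMul Γ Mt]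
    (X : Type) [MeasurableSpace X]
    (μ : Measure X) [MulAction Γ X]
    (hpres : ∀ γ : Γ, MeasurePreserving (fun x : X => γ • x) μ μ)
    -- c = Σ_j f_j ⊗ σ_j is a parametrised fundamental cycle in reduced form
    (m : ℕ) (f : Fin m → X → ℤ) (σ : Fin m → SSimplex n Mt)
    (c : ParamChain n Γ Mt X ℤ)
    (hcoeff : ∀ (j) (γ : Γ) (x), c.coeff (γ • σ j) x = f j (γ⁻¹ • x))
    (γj : Fin m → Γ)
    (R : X → X → Prop)
    (hR : R = Relation.EqvGen fun x y => ∃ j, f j x ≠ 0 ∧ y = (γj j)⁻¹ • x) :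
    (∀ x y, R x y → ∃ γ : Γ, y = γ • x) ∧
      cost μ R ≤ ∑ j, μ {x | f j x ≠ 0} ∧
      ∑ j, μ {x | f j x ≠ 0} ≤ ∑ j, ∫⁻ x, ((f j x).natAbs : ℝ≥0∞) ∂μ := by
  have : MeasurableConstSMul Γ X := ⟨fun g => (hpres g).measurable⟩
  have hf : ∀ j x, f j x = c.coeff (σ j) x := fun j x => by simpa using (hcoeff j 1 x).symm
  have hsupp_meas : ∀ j, MeasurableSet {x | f j x ≠ 0} := fun j => by
    simp only [hf]
    exact (c.measurable_level (σ j) 0).compl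
  have hstep : ∀ j, ∀ x ∈ {x | f j x ≠ 0}, R x ((γj j)⁻¹ • x) := fun j x hx =>
    hR ▸ .rel _ _ ⟨j, hx, rfl⟩
  refine ⟨fun x y hxy => ?_, ?_,
    Finset.sum_le_sum fun j _ => measure_ne_zero_le_lintegral_natAbs μ (hsupp_meas j)⟩
  · subst hR
    exact exists_smul_eq_of_eqvGen (fun a b ⟨j, _, hb⟩ => ⟨_, hb⟩) hxy
  · exact cost_le_sum_measure_dom μ (fun j => .smul (γj j)⁻¹ _ (hsupp_meas j) (hstep j))
      (by subst hR; exact fun _ _ => Iff.rfl)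

/-- In the setup of the main theorem, the relation `R` generated by the partial
translations `φ_j : supp f_j → γ_j⁻¹ · supp f_j` associated with a parametrised
fundamental cycle in reduced form is a subrelation of the orbit relation `S` and
`cost_μ(R) ≤ Σ_j μ(supp f_j) ≤ |c|₁`. -/
theorem cost_genRel_le_norm
    (n : ℕ) (M : Type) [TopologicalSpace M] [T2Space M]
    [ChartedSpace (EuclideanSpace ℝ (Fin n)) M] [CompactSpace M] [ConnectedSpace M]
    (horient : ∃ w : SSimplex n M →₀ ℤ, IsFinFundCycle w)
    (Γ : Type) [Group Γ] [Countable Γ] (hΓ : Infinite Γ)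
    (Mt : Type) [TopologicalSpace Mt] [SimplyConnectedSpace Mt]
    [MulAction Γ Mt] [ContinuousConstSMul Γ Mt]
    (p : C(Mt, M)) (hcov : IsCoveringMap ⇑p)
    (hdeck : ∀ (γ : Γ) (y : Mt), p (γ • y) = p y)
    (hfree : ∀ (γ : Γ) (y : Mt), γ • y = y → γ = 1)
    (htrans : ∀ y z : Mt, p y = p z → ∃ γ : Γ, γ • y = z)
    (X : Type) [MeasurableSpace X] [StandardBorelSpace X]
    (μ : Measure X) [IsProbabilityMeasure μ] [MulAction Γ X]
    (hpres : ∀ γ : Γ, MeasurePreserving (fun x : X => γ • x) μ μ)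
    (hessfree : ∀ᵐ x ∂μ, ∀ γ : Γ, γ ≠ 1 → γ • x ≠ x)
    (herg : IsErgodicRel μ fun x y : X => ∃ γ : Γ, y = γ • x)
    -- D is a relatively compact set-theoretic fundamental domain
    (D : Set Mt) (hDcpt : IsCompact (closure D))
    (hDfund : ∀ y : Mt, ∃! γ : Γ, y ∈ γ • D)
    -- c = Σ_j f_j ⊗ σ_j is a parametrised fundamental cycle in reduced form
    (m : ℕ) (f : Fin m → X → ℤ) (σ : Fin m → SSimplex n Mt)
    (c : ParamChain n Γ Mt X ℤ) (hcfund : IsParamFundCycle p c)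
    (hcoeff : ∀ (j) (γ : Γ) (x), c.coeff (γ • σ j) x = f j (γ⁻¹ • x))
    (hsupp : ∀ τ, c.coeff τ ≠ 0 → ∃ j, ∃ γ : Γ, τ = γ • σ j)
    (hred : ∀ i j (γ : Γ), γ • σ i = σ j → i = j)
    (hv0 : ∀ j, σ j (vertex 0) ∈ D)
    (γj : Fin m → Γ) (hγj : ∀ j, σ j (vertex 1) ∈ γj j • D)
    (R : X → X → Prop)
    (hR : R = Relation.EqvGen fun x y => ∃ j, f j x ≠ 0 ∧ y = (γj j)⁻¹ • x) :
    (∀ x y, R x y → ∃ γ : Γ, y = γ • x) ∧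
      cost μ R ≤ ∑ j, μ {x | f j x ≠ 0} ∧
      ∑ j, μ {x | f j x ≠ 0} ≤ ∑ j, ∫⁻ x, ((f j x).natAbs : ℝ≥0∞) ∂μ :=
  cost_genRel_le_norm_general n Γ Mt X μ hpres m f σ c hcoeff γj R hR

end Paper
end
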